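/- arXiv:2306.06235 — 2 statements merged into one kernel-verified Lean document; each statement's English description precedes it below -/
import Mathlib

section
/- Let G = (V, E, w) be an edge-weighted graph in which every edge has weight at most Δ. Let P be a path in G from u to v of total length less than ζ·Δ for an integer ζ ≥ 1, where additionally every edge of P has weight less than ζ·Δ. Then P can be written as a concatenation Q₁ ∘ e₁ ∘ Q₂ ∘ e₂ ∘ … ∘ e_{ζ'-1} ∘ Q_{ζ'} with ζ' ≤ ζ, where each subpath Q_j has length at most Δ and each connecting edge e_j has weight less than ζ·Δ. -/
open scoped BigOperators ENNReal

/-- Length of a walk (given as a list of vertices) under edge-weight `w`. -/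
noncomputable def walkLen {V : Type*} (w : V → V → ℝ) : List V → ℝ
  | [] => 0
  | [_] => 0
  | a :: b :: l => w a b + walkLen w (b :: l)

/-- `l` is a walk from `u` to `v` in the graph with edge relation `E`. -/
def IsWalk {V : Type*} (E : V → V → Prop) (u v : V) (l : List V) : Prop :=
  l.head? = some u ∧ l.getLast? = some v ∧ l.Chain' E

/-- Shortest-path distance in an edge-weighted graph. -/
noncomputable def gdist {V : Type*} (E : V → V → Prop) (w : V → V → ℝ) (u v : V) : ℝ :=
  sInf {L | ∃ l, IsWalk E u v l ∧ walkLen w l = L}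

/-- Shortest-path distance from a vertex to a set of vertices. -/
noncomputable def gdistK {V : Type*} (E : V → V → Prop) (w : V → V → ℝ) (K : Set V) (v : V) : ℝ :=
  sInf {L | ∃ t ∈ K, ∃ l, IsWalk E v t l ∧ walkLen w l = L}

/-- Shortest-path distance, valued in `ℝ≥0∞` (so `⊤` if there is no walk). -/
noncomputable def gdistE {V : Type*} (E : V → V → Prop) (w : V → V → ℝ) (u v : V) : ℝ≥0∞ :=
  ⨅ l : {l : List V // IsWalk E u v l}, ENNReal.ofReal (walkLen w l.1)

section Aux

variable {V : Type*}

lemma walkLen_nonneg (w : V → V → ℝ) (hw : ∀ a b, 0 ≤ w a b) :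
    ∀ l : List V, 0 ≤ walkLen w l
  | [] => le_refl _
  | [_] => le_refl _
  | a :: b :: l => by
      have h := walkLen_nonneg w hw (b :: l)
      simp only [walkLen]
      exact add_nonneg (hw a b) h

lemma walkLen_append (w : V → V → ℝ) :
    ∀ (A : List V) (a b : V) (l : List V), A.getLast? = some a →
      walkLen w (A ++ b :: l) = walkLen w A + w a b + walkLen w (b :: l)
  | [], a, b, l, h => by simp at h
  | [x], a, b, l, h => by
      simp only [List.getLast?_singleton, Option.some.injEq] at h
      subst h
      simp [walkLen]
  | x :: y :: A, a, b, l, h => by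
      have h' : (y :: A).getLast? = some a := by
        rw [List.getLast?_cons_cons] at h; exact h
      have ih := walkLen_append w (y :: A) a b l h'
      simp only [List.cons_append, walkLen, List.append_eq]
      simp only [List.cons_append, List.append_eq] at ih
      rw [ih]; ring

open Classical in
/-- Greedy split: maximal prefix with `walkLen ≤ budget`, and the rest. -/
noncomputable def splitW (w : V → V → ℝ) : ℝ → List V → List V × List V
  | _, [] => ([], [])
  | _, [a] => ([a], [])
  | budget, a :: b :: l =>
      if w a b ≤ budget then
        ((a :: (splitW w (budget - w a b) (b :: l)).1),
          (splitW w (budget - w a b) (b :: l)).2)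
      else ([a], b :: l)

lemma splitW_spec (w : V → V → ℝ) :
    ∀ (budget : ℝ) (_ : 0 ≤ budget) (P : List V),
    (splitW w budget P).1 ++ (splitW w budget P).2 = P ∧
    (P ≠ [] → (splitW w budget P).1 ≠ []) ∧
    walkLen w (splitW w budget P).1 ≤ budget ∧
    (∀ a ∈ (splitW w budget P).1.getLast?, ∀ b ∈ (splitW w budget P).2.head?,
      budget < walkLen w (splitW w budget P).1 + w a b)
  | budget, hb, [] => by
      simp [splitW, walkLen, hb]
  | budget, hb, [x] => by
      simp [splitW, walkLen, hb]
  | budget, hb, a :: b :: l => by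
      by_cases hab : w a b ≤ budget
      · have hb' : 0 ≤ budget - w a b := by linarith
        obtain ⟨ih1, ih2, ih3, ih4⟩ := splitW_spec w (budget - w a b) hb' (b :: l)
        set q := (splitW w (budget - w a b) (b :: l)).1 with hq
        set r := (splitW w (budget - w a b) (b :: l)).2 with hr
        have hqne : q ≠ [] := ih2 (by simp)
        have hqs : (splitW w budget (a :: b :: l)) = (a :: q, r) := by
          rw [splitW, if_pos hab]
        obtain ⟨t, ht⟩ : ∃ t, q = b :: t := by
          obtain ⟨c, t, hct⟩ := List.exists_cons_of_ne_nil hqne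
          rw [hct] at ih1
          simp only [List.cons_append, List.cons.injEq] at ih1
          exact ⟨t, by rw [hct, ih1.1]⟩
        refine ⟨?_, ?_, ?_, ?_⟩ <;> rw [hqs]
        · simpa using ih1
        · simp
        · rw [ht]
          simp only [walkLen]
          rw [← ht]
          linarith
        · intro x hx y hy
          rw [ht] at hx
          rw [List.getLast?_cons_cons, ← ht] at hx
          have := ih4 x hx y hy
          rw [ht]
          simp only [walkLen]
          rw [← ht]
          linarith
      · have hqs : (splitW w budget (a :: b :: l)) = ([a], b :: l) := by
          rw [splitW, if_neg hab]
        refine ⟨by rw [hqs]; simp, by rw [hqs]; simp, by rw [hqs]; simpa [walkLen] using hb, ?_⟩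
        intro x hx y hy
        rw [hqs] at hx hy ⊢
        simp only [List.getLast?_singleton, Option.mem_def, Option.some.injEq] at hx
        simp only [List.head?_cons, Option.mem_def, Option.some.injEq] at hy
        subst hx; subst hy
        simp only [walkLen]
        linarith

lemma greedy_decomp (E : V → V → Prop) (w : V → V → ℝ)
    (hw : ∀ a b, 0 ≤ w a b) (Δ : ℝ) (hΔ : 0 < Δ) :
    ∀ (ζ : ℕ) (P : List V) (u v : V), IsWalk E u v P → walkLen w P < (ζ : ℝ) * Δ →
    ∃ Qs : List (List V), Qs.flatten = P ∧ Qs.length ≤ ζ ∧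
      (∀ Q ∈ Qs, Q ≠ [] ∧ walkLen w Q ≤ Δ) ∧
      List.Chain' (fun A B => ∀ a ∈ A.getLast?, ∀ b ∈ B.head?, E a b) Qs := by
  intro ζ
  induction ζ with
  | zero =>
      intro P u v hP hlen
      exact absurd hlen (by simpa using walkLen_nonneg w hw P)
  | succ ζ ih =>
      intro P u v hP hlen
      obtain ⟨hPh, hPl, hPc⟩ := hP
      have hPne : P ≠ [] := by intro h; rw [h] at hPh; simp at hPh
      by_cases hsmall : walkLen w P ≤ Δ
      · exact ⟨[P], by simp, by simp, by simpa using ⟨hPne, hsmall⟩, List.isChain_singleton P⟩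
      · obtain ⟨h1, h2, h3, h4⟩ := splitW_spec w Δ hΔ.le P
        set q := (splitW w Δ P).1 with hq
        set r := (splitW w Δ P).2 with hr
        have hqne : q ≠ [] := h2 hPne
        have hrne : r ≠ [] := by
          intro h
          rw [h, List.append_nil] at h1
          rw [h1] at h3
          exact hsmall h3
        obtain ⟨a, hqa⟩ : ∃ a, q.getLast? = some a :=
          ⟨q.getLast hqne, List.getLast?_eq_getLast hqne⟩
        obtain ⟨b, rb, hbr⟩ : ∃ b rb, r = b :: rb := by
          obtain ⟨b, rb, h⟩ := List.exists_cons_of_ne_nil hrne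
          exact ⟨b, rb, h⟩
        have hrb : r.head? = some b := by rw [hbr]; rfl
        -- length accounting
        have hlenP : walkLen w P = walkLen w q + w a b + walkLen w r := by
          rw [← h1, hbr]
          exact walkLen_append w q a b rb hqa
        have hjump : Δ < walkLen w q + w a b := h4 a hqa b hrb
        have hlenr : walkLen w r < (ζ : ℝ) * Δ := by
          have : walkLen w P < ((ζ : ℕ) + 1 : ℝ) * Δ := by
            push_cast at hlen ⊢; linarith
          nlinarith [walkLen_nonneg w hw r]
        -- chains
        have hchain : List.Chain' E q ∧ List.Chain' E r ∧
            ∀ x ∈ q.getLast?, ∀ y ∈ r.head?, E x y := by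
          unfold List.Chain'; rw [← List.isChain_append, h1]; exact hPc
        have hrl : r.getLast? = some v := by
          have h'' : (some (r.getLast hrne)).or q.getLast? = some v := by
            rw [← List.getLast?_eq_getLast hrne, ← List.getLast?_append, h1]
            exact hPl
          have h3' : some (r.getLast hrne) = some v := h''
          rw [List.getLast?_eq_getLast hrne, h3']
        have hrwalk : IsWalk E b v r := ⟨hrb, hrl, hchain.2.1⟩
        obtain ⟨Qs, hQf, hQl, hQm, hQc⟩ := ih r b v hrwalk hlenr
        have hQsne : Qs ≠ [] := by
          intro h; rw [h] at hQf; exact hrne hQf.symm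
        refine ⟨q :: Qs, by simp [hQf, h1], by simpa using hQl, ?_, ?_⟩
        · intro Q hQ
          rcases List.mem_cons.mp hQ with h | h
          · exact h ▸ ⟨hqne, h3⟩
          · exact hQm Q h
        · unfold List.Chain'; rw [List.isChain_cons]
          refine ⟨?_, hQc⟩
          intro B hB x hx y hy
          obtain ⟨B', Qs', hQs⟩ := List.exists_cons_of_ne_nil hQsne
          rw [hQs] at hB hQm hQf
          simp only [List.head?_cons, Option.mem_def, Option.some.injEq] at hB
          rw [← hB] at hy
          have hB'ne : B' ≠ [] := (hQm B' (by simp)).1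
          have h5 := congrArg List.head? hQf
          rw [List.flatten_cons, List.head?_append, List.head?_eq_head hB'ne, hrb] at h5
          have h6 : some (B'.head hB'ne) = some b := h5
          have hBhead : B'.head? = some b := by
            rw [List.head?_eq_head hB'ne]; exact h6
          rw [hBhead] at hy
          rw [hqa] at hx
          simp only [Option.mem_def, Option.some.injEq] at hx hy
          subst hx; subst hy
          exact hchain.2.2 _ hqa _ hrb

end Aux

/-- greedy decomposition of a path of length `< ζ·Δ` into at most `ζ`
subpaths of length at most `Δ`, joined by edges of weight `< ζ·Δ`. -/
theorem stmt_1 {V : Type*} (E : V → V → Prop) (w : V → V → ℝ)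
    (hw : ∀ a b, 0 ≤ w a b) (Δ : ℝ) (hΔ : 0 < Δ)
    (hE : ∀ a b, E a b → w a b ≤ Δ)
    (ζ : ℕ) (hζ : 1 ≤ ζ) (u v : V) (P : List V)
    (hP : IsWalk E u v P)
    (hlen : walkLen w P < (ζ : ℝ) * Δ)
    (hedge : ∀ p ∈ P.zip P.tail, w p.1 p.2 < (ζ : ℝ) * Δ) :
    ∃ Qs : List (List V), Qs.flatten = P ∧ Qs.length ≤ ζ ∧
      (∀ Q ∈ Qs, Q ≠ [] ∧ walkLen w Q ≤ Δ) ∧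
      List.Chain' (fun A B => ∀ a ∈ A.getLast?, ∀ b ∈ B.head?, w a b < (ζ : ℝ) * Δ) Qs := by
  obtain ⟨Qs, hQf, hQl, hQm, hQc⟩ := greedy_decomp E w hw Δ hΔ ζ P u v hP hlen
  refine ⟨Qs, hQf, hQl, hQm, ?_⟩
  match Qs, hQc, hQl with
  | [], _, _ => exact List.isChain_nil
  | [Q], _, _ => exact List.isChain_singleton Q
  | A :: B :: rest, hQc, hQl =>
      have hζ2 : (2 : ℝ) ≤ (ζ : ℝ) := by
        have : 2 ≤ ζ := le_trans (by simp) hQl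
        exact_mod_cast this
      refine List.IsChain.imp ?_ hQc
      intro X Y hXY x hx y hy
      have hxy := hXY x hx y hy
      have := hE x y hxy
      nlinarith
end

section
/- Let f : V → K be a function on the vertices of a graph and let π = (u₁, …, u_m) be a walk in the graph. Call a maximal contiguous block of π a 'detour' if its first and last vertices have the same f-value. Suppose the vertices of π take values in at most τ classes of a partition 𝒫, and f is constant on each class of 𝒫 restricted to vertices where f is defined. Then π can be partitioned into at most τ detours and at most τ + 1 contiguous blocks consisting only of vertices where f is undefined. -/
open scoped BigOperators ENNReal

private lemma head_dropWhile_false {α : Type*} (p : α → Bool) :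
    ∀ (l : List α) {a : α} {l' : List α}, l.dropWhile p = a :: l' → p a = false := by
  intro l
  induction l with
  | nil => intro a l' h; simp at h
  | cons x xs ih =>
    intro a l' h
    by_cases hx : p x
    · rw [List.dropWhile_cons_of_pos hx] at h; exact ih h
    · rw [List.dropWhile_cons_of_neg hx] at h
      obtain ⟨rfl, rfl⟩ := List.cons.injEq .. ▸ h
      · simpa using hx

private lemma key {V K ι : Type*} (E : V → V → Prop) (f : V → Option K) (cl : V → ι)
    (hconst : ∀ a b, cl a = cl b → f a ≠ none → f b ≠ none → f a = f b) :
    ∀ (n : ℕ) (π : List V), π.length ≤ n → ∀ (τ : ℕ), List.Chain' E π →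
    {c : ι | ∃ z ∈ π, f z ≠ none ∧ cl z = c}.ncard ≤ τ →
    ∃ Bs : List (Bool × List V),
      (Bs.map Prod.snd).flatten = π ∧
      (∀ p ∈ Bs, p.2 ≠ []) ∧
      (∀ p ∈ Bs, p.1 = true →
        ∃ a ∈ p.2.head?, ∃ b ∈ p.2.getLast?, f a ≠ none ∧ f a = f b) ∧
      (∀ p ∈ Bs, p.1 = false → ∀ x ∈ p.2, f x = none) ∧
      (Bs.filter (fun p => p.1)).length ≤ τ ∧
      (Bs.filter (fun p => !p.1)).length ≤ τ + 1 := by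
  classical
  intro n
  induction n with
  | zero =>
    intro π hlen τ _ _
    have : π = [] := List.length_eq_zero_iff.mp (Nat.le_zero.mp hlen)
    subst this
    exact ⟨[], by simp⟩
  | succ n ih =>
    intro π hlen τ hπ hτ
    -- split off initial unassigned prefix
    set Q : V → Bool := fun x => (f x).isNone with hQ
    have hsplit : π.takeWhile Q ++ π.dropWhile Q = π := List.takeWhile_append_dropWhile ..
    rcases hd : π.dropWhile Q with _ | ⟨u, rest⟩
    · -- all unassigned
      have hall : ∀ x ∈ π, f x = none := by
        intro x hx
        have := (List.dropWhile_eq_nil_iff).mp hd x hx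
        simpa [hQ, Option.isNone_iff_eq_none] using this
      rcases π with _ | ⟨a, π'⟩
      · exact ⟨[], by simp⟩
      · refine ⟨[(false, a :: π')], by simp, by simp, by simp, ?_, by simp, by simp⟩
        intro p hp _ x hx
        simp only [List.mem_singleton] at hp
        subst hp
        exact hall x hx
    · -- u is the first assigned vertex
      have hu_not : Q u = false := head_dropWhile_false Q π hd
      have hfu : f u ≠ none := fun h => by simp [hQ, h] at hu_not
      set pre := π.takeWhile Q with hpre
      have hπeq : pre ++ u :: rest = π := by rw [hpre, ← hd]; exact hsplit
      have hpre_none : ∀ x ∈ pre, f x = none := by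
        intro x hx
        have := List.mem_takeWhile_imp hx
        simpa [hQ, Option.isNone_iff_eq_none] using this
      -- find last occurrence of cluster (cl u) among assigned vertices
      set P : V → Bool := fun x => !((f x).isSome && decide (cl x = cl u)) with hP
      set r : List V := (u :: rest).reverse with hr
      have hPu : P u = false := by
        simp [hP, Option.isSome_iff_ne_none, hfu]
      have hdropr : r.dropWhile P ≠ [] := by
        intro hnil
        have := (List.dropWhile_eq_nil_iff).mp hnil u (by simp [hr])
        rw [hPu] at this; exact Bool.false_ne_true this
      rcases hdr : r.dropWhile P with _ | ⟨v, l'⟩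
      · exact absurd hdr hdropr
      have hPv : P v = false := head_dropWhile_false P r hdr
      have hfv : f v ≠ none ∧ cl v = cl u := by
        simpa [hP, Option.isSome_iff_ne_none, -Bool.not_eq_true] using hPv
      have hrsplit : r.takeWhile P ++ v :: l' = r := by rw [← hdr]; exact List.takeWhile_append_dropWhile ..
      set D : List V := l'.reverse ++ [v] with hD
      set T : List V := (r.takeWhile P).reverse with hT
      have hDT : D ++ T = u :: rest := by
        have : (u :: rest) = r.reverse := by simp [hr]
        rw [this, ← hrsplit]
        simp [hD, hT]
      -- T properties
      have hT_mem : ∀ x ∈ T, x ∈ π ∧ (f x = none ∨ cl x ≠ cl u) := by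
        intro x hx
        have hx' : x ∈ r.takeWhile P := by simpa [hT] using hx
        have hxr : x ∈ r := (List.takeWhile_prefix P).subset hx'
        have hxπ : x ∈ π := by
          rw [← hπeq]
          simp only [hr, List.mem_reverse] at hxr
          exact List.mem_append_right _ hxr
        have hPx := List.mem_takeWhile_imp hx'
        exact ⟨hxπ, by simpa [hP] using hPx⟩
      -- chain facts
      have hchain2 : List.Chain' E (u :: rest) := ((List.isChain_append).mp (hπeq ▸ hπ)).2.1
      have hchainT : List.Chain' E T := ((List.isChain_append).mp (hDT ▸ hchain2)).2.1
      -- length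
      have hlenT : T.length ≤ n := by
        have h1 : pre.length + (D.length + T.length) = π.length := by
          rw [← hπeq, ← hDT]; simp
        have hDpos : 1 ≤ D.length := by simp [hD]
        omega
      -- cluster set bookkeeping
      set S : Set ι := {c : ι | ∃ z ∈ π, f z ≠ none ∧ cl z = c} with hS
      have hSfin : S.Finite := by
        apply (π.finite_toSet.image cl).subset
        rintro c ⟨z, hz, _, rfl⟩
        exact ⟨z, hz, rfl⟩
      have hcS : cl u ∈ S := ⟨u, by rw [← hπeq]; exact List.mem_append_right _ (by simp), hfu, rfl⟩
      have hτpos : 1 ≤ τ := le_trans ((Set.ncard_pos hSfin).mpr ⟨_, hcS⟩) hτ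
      have hsub : {c : ι | ∃ z ∈ T, f z ≠ none ∧ cl z = c} ⊆ S \ {cl u} := by
        rintro c ⟨z, hz, hfz, rfl⟩
        obtain ⟨hzπ, hor⟩ := hT_mem z hz
        refine ⟨⟨z, hzπ, hfz, rfl⟩, ?_⟩
        simp only [Set.mem_singleton_iff]
        rcases hor with h | h
        · exact absurd h hfz
        · exact h
      have hτT : {c : ι | ∃ z ∈ T, f z ≠ none ∧ cl z = c}.ncard ≤ τ - 1 := by
        have h1 := Set.ncard_le_ncard hsub (hSfin.diff)
        have h2 := Set.ncard_diff_singleton_lt_of_mem hcS hSfin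
        omega
      obtain ⟨Bs', hflat', hne', htrue', hfalse', hcnt1', hcnt2'⟩ :=
        ih T hlenT (τ - 1) hchainT hτT
      -- D is a detour
      have hDne : D ≠ [] := by simp [hD]
      have hDhead : D.head? = some u := by
        have h := congrArg List.head? hDT
        rcases D with _ | ⟨d, D'⟩
        · exact absurd rfl hDne
        · simpa using h
      have hDlast : D.getLast? = some v := by
        rw [hD]; exact List.getLast?_concat
      have hfuv : f u = f v := hconst u v hfv.2.symm hfu hfv.1
      -- assemble
      have hflat0 : ((List.map Prod.snd ((true, D) :: Bs')).flatten) = u :: rest := by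
        simpa [hflat'] using hDT
      have hfilt1 : ((true, D) :: Bs').filter (fun p => p.1) =
          (true, D) :: Bs'.filter (fun p => p.1) := by simp
      have hfilt2 : ((true, D) :: Bs').filter (fun p => !p.1) =
          Bs'.filter (fun p => !p.1) := by simp
      have hcnt1 : (((true, D) :: Bs').filter (fun p => p.1)).length ≤ τ := by
        rw [hfilt1]; simp only [List.length_cons]; omega
      have hcnt2 : (((true, D) :: Bs').filter (fun p => !p.1)).length ≤ τ := by
        rw [hfilt2]; omega
      have hne0 : ∀ p ∈ (true, D) :: Bs', p.2 ≠ [] := by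
        intro p hp
        rcases List.mem_cons.mp hp with rfl | hp
        · simp [hD]
        · exact hne' p hp
      have htrue0 : ∀ p ∈ (true, D) :: Bs', p.1 = true →
          ∃ a ∈ p.2.head?, ∃ b ∈ p.2.getLast?, f a ≠ none ∧ f a = f b := by
        intro p hp ht
        rcases List.mem_cons.mp hp with rfl | hp
        · exact ⟨u, by simpa using hDhead, v, by simpa using hDlast, hfu, hfuv⟩
        · exact htrue' p hp ht
      have hfalse0 : ∀ p ∈ (true, D) :: Bs', p.1 = false → ∀ x ∈ p.2, f x = none := by
        intro p hp hf
        rcases List.mem_cons.mp hp with rfl | hp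
        · simp at hf
        · exact hfalse' p hp hf
      by_cases hpp : pre = []
      · refine ⟨(true, D) :: Bs', ?_, hne0, htrue0, hfalse0, hcnt1, hcnt2.trans (by omega)⟩
        rw [hflat0, ← hπeq, hpp, List.nil_append]
      · refine ⟨(false, pre) :: (true, D) :: Bs', ?_, ?_, ?_, ?_, ?_, ?_⟩
        · simp only [List.map_cons, List.flatten_cons]
          rw [hflat', hDT]; exact hπeq
        · intro p hp
          rcases List.mem_cons.mp hp with rfl | hp
          · exact hpp
          · exact hne0 p hp
        · intro p hp ht
          rcases List.mem_cons.mp hp with rfl | hp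
          · simp at ht
          · exact htrue0 p hp ht
        · intro p hp hf
          rcases List.mem_cons.mp hp with rfl | hp
          · exact fun x hx => hpre_none x hx
          · exact hfalse0 p hp hf
        · have : ((false, pre) :: (true, D) :: Bs').filter (fun p => p.1) =
              ((true, D) :: Bs').filter (fun p => p.1) := by simp
          rw [this]; exact hcnt1
        · have : ((false, pre) :: (true, D) :: Bs').filter (fun p => !p.1) =
              (false, pre) :: ((true, D) :: Bs').filter (fun p => !p.1) := by simp
          rw [this]; simp only [List.length_cons]; omega

/-- a walk whose assigned vertices meet at most `τ` clusters (with the partial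
assignment `f` constant on each cluster) splits into at most `τ` detours (blocks whose first
and last vertices are assigned to the same terminal) and at most `τ + 1` blocks of
unassigned vertices. -/
theorem stmt_10 {V K ι : Type*} (E : V → V → Prop) (f : V → Option K)
    (cl : V → ι) (τ : ℕ)
    (hconst : ∀ a b, cl a = cl b → f a ≠ none → f b ≠ none → f a = f b)
    (π : List V) (hπ : List.Chain' E π)
    (hτ : {c : ι | ∃ z ∈ π, f z ≠ none ∧ cl z = c}.ncard ≤ τ) :
    ∃ Bs : List (Bool × List V),
      (Bs.map Prod.snd).flatten = π ∧
      (∀ p ∈ Bs, p.2 ≠ []) ∧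
      (∀ p ∈ Bs, p.1 = true →
        ∃ a ∈ p.2.head?, ∃ b ∈ p.2.getLast?, f a ≠ none ∧ f a = f b) ∧
      (∀ p ∈ Bs, p.1 = false → ∀ x ∈ p.2, f x = none) ∧
      (Bs.filter (fun p => p.1)).length ≤ τ ∧
      (Bs.filter (fun p => !p.1)).length ≤ τ + 1 := by
  exact key E f cl hconst π.length π le_rfl τ hπ hτ
end
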